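/- arXiv:math/0607046 — 2 statements merged into one kernel-verified Lean document; each statement's English description precedes it below -/
import Mathlib

section
/- The sequential uniform Vervaat error process satisfies the algebraic identity Q_n(s,t) = A_n(s,t) − d_n^{-2}(R_n*(s,t))², where A_n(s,t) = 2 d_n^{-1}[nt] ∫_{Û_{[nt]}(s)}^{s} (α_n(y,t) − α_n(s,t)) dy. -/
open Finset intervalIntegral

noncomputable def Ehat (U : ℕ → ℝ) (m : ℕ) (s : ℝ) : ℝ :=
  (∑ i ∈ Finset.range m, if U i ≤ s then (1:ℝ) else 0) / m

noncomputable def Uhat (U : ℕ → ℝ) (m : ℕ) (y : ℝ) : ℝ :=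
  sInf {s ∈ Set.Icc (0:ℝ) 1 | y ≤ Ehat U m s}

noncomputable def alphaProc (d : ℝ) (U : ℕ → ℝ) (n : ℕ) (y t : ℝ) : ℝ :=
  d⁻¹ * (⌊(n:ℝ)*t⌋₊ : ℝ) * (Ehat U ⌊(n:ℝ)*t⌋₊ y - y)

noncomputable def uProc (d : ℝ) (U : ℕ → ℝ) (n : ℕ) (y t : ℝ) : ℝ :=
  d⁻¹ * (⌊(n:ℝ)*t⌋₊ : ℝ) * (y - Uhat U ⌊(n:ℝ)*t⌋₊ y)

/-- Sequential uniform Bahadur–Kiefer process `R_n^*(y,t) = d_n(α_n(y,t) − u_n(y,t))`. -/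
noncomputable def Rstar (d : ℝ) (U : ℕ → ℝ) (n : ℕ) (y t : ℝ) : ℝ :=
  d * (alphaProc d U n y t - uProc d U n y t)

/-- Sequential uniform Vervaat process `V_n(s,t) = 2 d_n^{-2}[nt] ∫_0^s R_n^*(y,t) dy`. -/
noncomputable def Vver (d : ℝ) (U : ℕ → ℝ) (n : ℕ) (s t : ℝ) : ℝ :=
  2 * (d^2)⁻¹ * (⌊(n:ℝ)*t⌋₊ : ℝ) * ∫ y in (0:ℝ)..s, Rstar d U n y t

/-- Sequential Vervaat error process `Q_n(s,t) = V_n(s,t) − α_n²(s,t)`. -/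
noncomputable def Qver (d : ℝ) (U : ℕ → ℝ) (n : ℕ) (s t : ℝ) : ℝ :=
  Vver d U n s t - (alphaProc d U n s t)^2

/-- The process `A_n(s,t) = 2 d_n^{-1}[nt] ∫_{Û_{[nt]}(s)}^{s} (α_n(y,t) − α_n(s,t)) dy`. -/
noncomputable def Aver (d : ℝ) (U : ℕ → ℝ) (n : ℕ) (s t : ℝ) : ℝ :=
  2 * d⁻¹ * (⌊(n:ℝ)*t⌋₊ : ℝ) *
    ∫ y in (Uhat U ⌊(n:ℝ)*t⌋₊ s)..s, (alphaProc d U n y t - alphaProc d U n s t)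

/-! After factoring out powers of `d⁻¹ ⌊nt⌋`, both sides are deterministic expressions in the
empirical distribution function `E = Ehat U ⌊nt⌋` and the empirical quantile function
`Q = Uhat U ⌊nt⌋`. On `[0, 1]` these form a Galois connection `Q y ≤ x ↔ y ≤ E x` (because `E` is
a right-continuous step function), and the layer-cake formula turns it into Young's identity
`∫₀ˢ Q = s Q(s) - ∫₀^{Q(s)} E`. Substituting it, the claim becomes a polynomial identity in `s`,
`Q(s)`, `E(s)` and `∫ E`. -/

open MeasureTheory Set Filter Topology

section GaloisConnection

variable {E Q : ℝ → ℝ} {s : ℝ}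

theorem monotoneOn_of_gc (hQ₀ : ∀ y ∈ Icc 0 s, 0 ≤ Q y)
    (hgc : ∀ y ∈ Icc 0 s, ∀ x, 0 ≤ x → (Q y ≤ x ↔ y ≤ E x)) : MonotoneOn Q (Icc 0 s) :=
  fun y₁ hy₁ y₂ hy₂ h =>
    (hgc y₁ hy₁ _ (hQ₀ y₂ hy₂)).2 (h.trans ((hgc y₂ hy₂ _ (hQ₀ y₂ hy₂)).1 le_rfl))

theorem integral_eq_mul_sub_integral_of_gc (hs : 0 ≤ s) (hE : Monotone E) (hE₀ : 0 ≤ E 0)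
    (hQ₀ : ∀ y ∈ Icc 0 s, 0 ≤ Q y) (hgc : ∀ y ∈ Icc 0 s, ∀ x, 0 ≤ x → (Q y ≤ x ↔ y ≤ E x)) :
    ∫ y in 0..s, Q y = s * Q s - ∫ x in 0..Q s, E x := by
  have hsIcc : s ∈ Icc 0 s := ⟨hs, le_rfl⟩
  have hQint : IntegrableOn Q (Ioc 0 s) := by
    rw [← intervalIntegrable_iff_integrableOn_Ioc_of_le hs]
    exact MonotoneOn.intervalIntegrable (uIcc_of_le hs ▸ monotoneOn_of_gc hQ₀ hgc)
  have hlevel : ∀ x ∈ Ioi (0 : ℝ),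
      (volume.restrict (Ioc 0 s)).real {y | x < Q y} = max (s - E x) 0 := by
    intro x hx
    have hEx : 0 ≤ E x := hE₀.trans (hE (le_of_lt hx))
    have : {y | x < Q y} ∩ Ioc 0 s = Ioc (E x) s := by
      ext y
      simp only [mem_inter_iff, mem_ofPred_eq, Set.mem_Ioc]
      constructor
      · rintro ⟨hxy, hy₀, hys⟩
        exact ⟨lt_of_not_ge fun h => hxy.not_ge ((hgc y ⟨hy₀.le, hys⟩ x (le_of_lt hx)).2 h), hys⟩
      · rintro ⟨hxy, hys⟩
        have hy₀ : 0 < y := hEx.trans_lt hxy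
        exact ⟨lt_of_not_ge fun h => hxy.not_ge ((hgc y ⟨hy₀.le, hys⟩ x (le_of_lt hx)).1 h),
          hy₀, hys⟩
    rw [measureReal_restrict_apply' measurableSet_Ioc, this, Real.volume_real_Ioc]
  have hlt : ∀ x, 0 ≤ x → (x < Q s ↔ E x < s) := fun x hx => by
    simpa only [not_le] using (hgc s hsIcc x hx).not
  calc ∫ y in 0..s, Q y
      = ∫ x in Ioi 0, max (s - E x) 0 := by
        rw [integral_of_le hs, hQint.integral_eq_integral_meas_lt
          (ae_restrict_of_forall_mem measurableSet_Ioc fun y hy => hQ₀ y (Ioc_subset_Icc_self hy))]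
        exact setIntegral_congr_fun measurableSet_Ioi hlevel
    _ = ∫ x in Ioo 0 (Q s), max (s - E x) 0 := by
        refine setIntegral_eq_of_subset_of_forall_sdiff_eq_zero measurableSet_Ioi
          Ioo_subset_Ioi_self fun x ⟨hx₀, hxb⟩ => ?_
        have : ¬ x < Q s := fun h => hxb ⟨hx₀, h⟩
        rw [hlt x (le_of_lt hx₀), not_lt] at this
        exact max_eq_right (sub_nonpos.2 this)
    _ = ∫ x in Ioo 0 (Q s), (s - E x) := setIntegral_congr_fun measurableSet_Ioo fun x hx =>
        max_eq_left (sub_nonneg.2 ((hlt x hx.1.le).1 hx.2).le)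
    _ = s * Q s - ∫ x in 0..Q s, E x := by
        rw [← integral_Ioc_eq_integral_Ioo, ← integral_of_le (hQ₀ s hsIcc),
          intervalIntegral.integral_sub intervalIntegrable_const hE.intervalIntegrable,
          intervalIntegral.integral_const, smul_eq_mul, sub_zero, mul_comm]

theorem vervaat_identity_of_young (hE : Monotone E) (hQ : IntervalIntegrable Q volume 0 s)
    (hyoung : ∫ y in 0..s, Q y = s * Q s - ∫ x in 0..Q s, E x) :
    2 * (∫ y in 0..s, (E y - y) - (y - Q y)) - (E s - s) ^ 2
      = 2 * (∫ y in Q s..s, (E y - y) - (E s - s)) - ((E s - s) - (s - Q s)) ^ 2 := by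
  have hE' : ∀ a b, IntervalIntegrable E volume a b := fun _ _ => hE.intervalIntegrable
  have hid : ∀ a b : ℝ, IntervalIntegrable (fun y => y) volume a b :=
    fun _ _ => intervalIntegrable_id
  have hsplit := integral_add_adjacent_intervals (hE' 0 (Q s)) (hE' (Q s) s)
  rw [integral_sub (by exact (hE' 0 s).sub (hid 0 s)) (by exact (hid 0 s).sub hQ),
    integral_sub (hE' 0 s) (hid 0 s), integral_sub (hid 0 s) hQ,
    integral_sub (by exact (hE' _ _).sub (hid _ _)) intervalIntegrable_const,
    integral_sub (hE' _ _) (hid _ _), integral_id, integral_id, intervalIntegral.integral_const,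
    smul_eq_mul]
  linear_combination 2 * hyoung - 2 * hsplit

theorem vervaat_identity_of_gc (hs : 0 ≤ s) (hE : Monotone E) (hE₀ : 0 ≤ E 0)
    (hQ₀ : ∀ y ∈ Icc 0 s, 0 ≤ Q y) (hgc : ∀ y ∈ Icc 0 s, ∀ x, 0 ≤ x → (Q y ≤ x ↔ y ≤ E x)) :
    2 * (∫ y in 0..s, (E y - y) - (y - Q y)) - (E s - s) ^ 2
      = 2 * (∫ y in Q s..s, (E y - y) - (E s - s)) - ((E s - s) - (s - Q s)) ^ 2 :=
  vervaat_identity_of_young hE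
    (MonotoneOn.intervalIntegrable (uIcc_of_le hs ▸ monotoneOn_of_gc hQ₀ hgc))
    (integral_eq_mul_sub_integral_of_gc hs hE hE₀ hQ₀ hgc)

end GaloisConnection

section Empirical

variable (U : ℕ → ℝ) (m : ℕ)

theorem Ehat_mono : Monotone (Ehat U m) := fun x y hxy => by
  unfold Ehat
  gcongr with i
  split_ifs with hx hy
  exacts [le_rfl, absurd (hx.trans hxy) hy, zero_le_one, le_rfl]

theorem Ehat_nonneg (x : ℝ) : 0 ≤ Ehat U m x := by
  unfold Ehat
  positivity

theorem Ehat_of_forall_le {x : ℝ} (hm : 0 < m) (hx : ∀ i, U i ≤ x) : Ehat U m x = 1 := by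
  simp [Ehat, hx, hm.ne']

theorem Ehat_eventuallyEq_nhdsGE (c : ℝ) : Ehat U m =ᶠ[𝓝[≥] c] fun _ => Ehat U m c := by
  have : ∀ i ∈ range m, ∀ᶠ x in 𝓝[≥] c, (U i ≤ x ↔ U i ≤ c) := fun i _ => by
    rcases le_or_gt (U i) c with h | h
    · filter_upwards [self_mem_nhdsWithin] with x hx using iff_of_true (h.trans hx) h
    · filter_upwards [nhdsWithin_le_nhds (Iio_mem_nhds h)] with x hx
        using iff_of_false (not_le.2 hx) (not_le.2 h)
  filter_upwards [(eventually_all_finset _).2 this] with x hx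
  simp only [Ehat]
  congr 1
  exact sum_congr rfl fun i hi => by simp only [hx i hi]

theorem Uhat_nonneg (y : ℝ) : 0 ≤ Uhat U m y :=
  Real.sInf_nonneg fun _ hx => hx.1.1

variable {U m} (hU : ∀ i, U i ≤ 1) (hm : 0 < m)
include hU hm

theorem le_Ehat_Uhat {y : ℝ} (hy : y ≤ 1) : y ≤ Ehat U m (Uhat U m y) := by
  set S := {x ∈ Icc (0 : ℝ) 1 | y ≤ Ehat U m x}
  have hS : S.Nonempty := ⟨1, ⟨zero_le_one, le_rfl⟩, by rwa [Ehat_of_forall_le U m hm hU]⟩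
  have hglb : IsGLB S (Uhat U m y) := isGLB_csInf hS ⟨0, fun _ hx => hx.1.1⟩
  obtain ⟨x, ⟨-, hyx⟩, hx⟩ :=
    ((hglb.frequently_mem hS).and_eventually (Ehat_eventuallyEq_nhdsGE U m _)).exists
  exact hyx.trans_eq hx

theorem Uhat_le_iff {x y : ℝ} (hy : y ≤ 1) (hx : 0 ≤ x) : Uhat U m y ≤ x ↔ y ≤ Ehat U m x := by
  refine ⟨fun h => (le_Ehat_Uhat hU hm hy).trans (Ehat_mono U m h), fun h => ?_⟩
  unfold Uhat
  rcases le_total x 1 with hx₁ | hx₁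
  · exact csInf_le ⟨0, fun _ hz => hz.1.1⟩ ⟨⟨hx, hx₁⟩, h⟩
  · refine le_trans (b := 1) (csInf_le ⟨0, fun _ hz => hz.1.1⟩ ?_) hx₁
    exact ⟨⟨zero_le_one, le_rfl⟩, by rwa [Ehat_of_forall_le U m hm hU]⟩

end Empirical

theorem vervaat_error_identity_general
    (d : ℝ) (U : ℕ → ℝ) (hU : ∀ i, U i ∈ Set.Icc (0:ℝ) 1) (n : ℕ)
    (s t : ℝ) (hs : s ∈ Set.Icc (0:ℝ) 1) :
    Qver d U n s t = Aver d U n s t - (d^2)⁻¹ * (Rstar d U n s t)^2 := by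
  have hvervaat := fun m (hm : 0 < m) => vervaat_identity_of_gc hs.1 (Ehat_mono U m)
    (Ehat_nonneg U m 0) (fun y _ => Uhat_nonneg U m y)
    fun y hy _ hx => Uhat_le_iff (fun i => (hU i).2) hm (hy.2.trans hs.2) hx
  unfold Qver Vver Aver Rstar alphaProc uProc
  generalize ⌊(n:ℝ)*t⌋₊ = m at hvervaat ⊢
  rcases Nat.eq_zero_or_pos m with rfl | hm
  · simp
  rcases eq_or_ne d 0 with rfl | hd
  · simp
  have hR : ∀ y, d * (d⁻¹ * m * (Ehat U m y - y) - d⁻¹ * m * (y - Uhat U m y))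
      = m * ((Ehat U m y - y) - (y - Uhat U m y)) := fun y => by
    field_simp
  simp only [hR]
  simp only [← mul_sub, intervalIntegral.integral_const_mul]
  linear_combination (d⁻¹ * m) ^ 2 * hvervaat m hm

/-- `Q_n(s,t) = A_n(s,t) − d_n^{-2}(R_n^*(s,t))²`. -/
theorem vervaat_error_identity
    (d : ℝ) (hd : 0 < d) (U : ℕ → ℝ) (hU : ∀ i, U i ∈ Set.Icc (0:ℝ) 1) (n : ℕ)
    (s t : ℝ) (hs : s ∈ Set.Icc (0:ℝ) 1) (ht : t ∈ Set.Icc (0:ℝ) 1) :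
    Qver d U n s t = Aver d U n s t - (d^2)⁻¹ * (Rstar d U n s t)^2 :=
  vervaat_error_identity_general d U hU n s t hs
end

section
/- Suppose F is a distribution function, twice differentiable on (a,b) with a = sup{x : F(x) = 0}, b = inf{x : F(x) = 1}, F' = f > 0 on (a,b), and for some γ > 0 it holds that F(x)(1 − F(x)) |f'(x)| / f²(x) ≤ γ for all x ∈ (a,b). Then for every pair y, θ ∈ (0,1), the ratio of density values satisfies f(Q(y))/f(Q(θ)) ≤ [θ(1−y)/(y(1−θ)) + y(1−θ)/(θ(1−y))]^γ, where Q = F^{-1} is the quantile function. -/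
/-- Auxiliary monotonicity lemma: for `s = ±1`, the function
`x ↦ s·log f(x) + γ·(log F(x) − log (1 − F(x)))` is increasing between points of `(a,b)`
where `F` stays in `(0,1)`. -/
lemma density_ratio_mono_aux
    (F f f' : ℝ → ℝ) (a b : ℝ) (γ : ℝ) (hγ : 0 < γ)
    (hFderiv : ∀ x ∈ Set.Ioo a b, HasDerivAt F (f x) x)
    (hfderiv : ∀ x ∈ Set.Ioo a b, HasDerivAt f (f' x) x)
    (hfpos : ∀ x ∈ Set.Ioo a b, 0 < f x)
    (hcond : ∀ x ∈ Set.Ioo a b, F x * (1 - F x) * |f' x| / (f x)^2 ≤ γ)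
    (s : ℝ) (hs : s = 1 ∨ s = -1)
    (c d : ℝ) (hc : c ∈ Set.Ioo a b) (hd : d ∈ Set.Ioo a b) (hcd : c ≤ d)
    (hF01 : ∀ x ∈ Set.Icc c d, F x ∈ Set.Ioo (0:ℝ) 1) :
    s * Real.log (f c) + γ * (Real.log (F c) - Real.log (1 - F c))
      ≤ s * Real.log (f d) + γ * (Real.log (F d) - Real.log (1 - F d)) := by
  have hIcc : Set.Icc c d ⊆ Set.Ioo a b := Set.Icc_subset_Ioo hc.1 hd.2
  set w : ℝ → ℝ := fun x =>
    s * Real.log (f x) + γ * (Real.log (F x) - Real.log (1 - F x)) with hw_def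
  have hw : ∀ x ∈ Set.Icc c d,
      HasDerivAt w (s * (f' x / f x) + γ * (f x / F x - (-f x) / (1 - F x))) x := by
    intro x hx
    have hxab := hIcc hx
    have h01 := hF01 x hx
    have hfx := hfpos x hxab
    have h1 : HasDerivAt (fun x => Real.log (f x)) (f' x / f x) x :=
      (hfderiv x hxab).log hfx.ne'
    have h2 : HasDerivAt (fun x => Real.log (F x)) (f x / F x) x :=
      (hFderiv x hxab).log h01.1.ne'
    have h3 : HasDerivAt (fun x => 1 - F x) (-f x) x := (hFderiv x hxab).const_sub 1
    have h4 : HasDerivAt (fun x => Real.log (1 - F x)) ((-f x) / (1 - F x)) x :=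
      h3.log (by linarith [h01.2] : (1:ℝ) - F x ≠ 0)
    exact (h1.const_mul s).add ((h2.sub h4).const_mul γ)
  have hnonneg : ∀ x ∈ Set.Icc c d,
      0 ≤ s * (f' x / f x) + γ * (f x / F x - (-f x) / (1 - F x)) := by
    intro x hx
    have hxab := hIcc hx
    have h01 := hF01 x hx
    have hA : 0 < f x := hfpos x hxab
    have hB : 0 < F x := h01.1
    have hC : 0 < 1 - F x := by linarith [h01.2]
    have hcondx : F x * (1 - F x) * |f' x| ≤ γ * (f x)^2 := by
      have h := hcond x hxab
      rw [div_le_iff₀ (by positivity)] at h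
      linarith
    have heq : s * (f' x / f x) + γ * (f x / F x - (-f x) / (1 - F x))
        = (s * f' x * (F x * (1 - F x)) + γ * (f x)^2) / (f x * (F x * (1 - F x))) := by
      field_simp
      ring
    rw [heq]
    apply div_nonneg _ (by positivity)
    rcases hs with rfl | rfl
    · nlinarith [le_abs_self (f' x), neg_abs_le (f' x), mul_pos hB hC]
    · nlinarith [le_abs_self (f' x), neg_abs_le (f' x), mul_pos hB hC]
  have hmono : MonotoneOn w (Set.Icc c d) := by
    apply monotoneOn_of_deriv_nonneg (convex_Icc c d)
    · exact fun x hx => (hw x hx).continuousAt.continuousWithinAt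
    · rw [interior_Icc]
      exact fun x hx =>
        ((hw x (Set.Ioo_subset_Icc_self hx)).differentiableAt).differentiableWithinAt
    · rw [interior_Icc]
      intro x hx
      rw [(hw x (Set.Ioo_subset_Icc_self hx)).deriv]
      exact hnonneg x (Set.Ioo_subset_Icc_self hx)
  exact hmono (Set.left_mem_Icc.2 hcd) (Set.right_mem_Icc.2 hcd) hcd

/-- Csörgő–Révész density-ratio inequality: if `F` is twice differentiable
on `(a,b)` with density `f > 0` and `F(x)(1−F(x))|f'(x)|/f(x)² ≤ γ` there, then for all
`y, θ ∈ (0,1)`: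
`f(Q(y))/f(Q(θ)) ≤ [θ(1−y)/(y(1−θ)) + y(1−θ)/(θ(1−y))]^γ`, where `Q = F⁻¹`. -/
theorem density_ratio_inequality
    (F f f' Q : ℝ → ℝ) (a b : ℝ) (hab : a < b) (γ : ℝ) (hγ : 0 < γ)
    (hFderiv : ∀ x ∈ Set.Ioo a b, HasDerivAt F (f x) x)
    (hfderiv : ∀ x ∈ Set.Ioo a b, HasDerivAt f (f' x) x)
    (hfpos : ∀ x ∈ Set.Ioo a b, 0 < f x)
    (hcond : ∀ x ∈ Set.Ioo a b, F x * (1 - F x) * |f' x| / (f x)^2 ≤ γ)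
    (hQ : ∀ y ∈ Set.Ioo (0:ℝ) 1, Q y ∈ Set.Ioo a b ∧ F (Q y) = y) :
    ∀ y ∈ Set.Ioo (0:ℝ) 1, ∀ θ ∈ Set.Ioo (0:ℝ) 1,
      f (Q y) / f (Q θ)
        ≤ (θ * (1 - y) / (y * (1 - θ)) + y * (1 - θ) / (θ * (1 - y))) ^ γ := by
  intro y hy θ hθ
  obtain ⟨hQy, hFQy⟩ := hQ y hy
  obtain ⟨hQθ, hFQθ⟩ := hQ θ hθ
  obtain ⟨hy0, hy1⟩ := hy
  obtain ⟨hθ0, hθ1⟩ := hθ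
  have hy1' : 0 < 1 - y := by linarith
  have hθ1' : 0 < 1 - θ := by linarith
  -- F is monotone on Ioo a b
  have hmonoF : MonotoneOn F (Set.Ioo a b) := by
    apply monotoneOn_of_deriv_nonneg (convex_Ioo a b)
    · exact fun x hx => (hFderiv x hx).continuousAt.continuousWithinAt
    · rw [interior_Ioo]
      exact fun x hx => ((hFderiv x hx).differentiableAt).differentiableWithinAt
    · rw [interior_Ioo]
      intro x hx
      rw [(hFderiv x hx).deriv]
      exact (hfpos x hx).le
  set r : ℝ := θ * (1 - y) / (y * (1 - θ)) with hr_def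
  set r' : ℝ := y * (1 - θ) / (θ * (1 - y)) with hr'_def
  have hr : 0 < r := by positivity
  have hr' : 0 < r' := by positivity
  have hlogr : Real.log r = Real.log θ + Real.log (1 - y) - Real.log y - Real.log (1 - θ) := by
    rw [hr_def, Real.log_div (by positivity) (by positivity),
      Real.log_mul hθ0.ne' hy1'.ne', Real.log_mul hy0.ne' hθ1'.ne']
    ring
  have hlogr' : Real.log r' = Real.log y + Real.log (1 - θ) - Real.log θ - Real.log (1 - y) := by
    rw [hr'_def, Real.log_div (by positivity) (by positivity),
      Real.log_mul hy0.ne' hθ1'.ne', Real.log_mul hθ0.ne' hy1'.ne']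
    ring
  have hfQy := hfpos _ hQy
  have hfQθ := hfpos _ hQθ
  -- key bound on log difference
  have key : Real.log (f (Q y)) - Real.log (f (Q θ)) ≤ γ * Real.log (r + r') := by
    rcases le_total (Q y) (Q θ) with h | h
    · have hF01 : ∀ x ∈ Set.Icc (Q y) (Q θ), F x ∈ Set.Ioo (0:ℝ) 1 := by
        intro x hx
        have hxab : x ∈ Set.Ioo a b := Set.Icc_subset_Ioo hQy.1 hQθ.2 hx
        have h1 := hmonoF hQy hxab hx.1
        have h2 := hmonoF hxab hQθ hx.2
        rw [hFQy] at h1; rw [hFQθ] at h2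
        exact ⟨lt_of_lt_of_le hy0 h1, lt_of_le_of_lt h2 hθ1⟩
      have := density_ratio_mono_aux F f f' a b γ hγ hFderiv hfderiv hfpos hcond
        1 (Or.inl rfl) (Q y) (Q θ) hQy hQθ h hF01
      rw [hFQy, hFQθ] at this
      have hle : Real.log (f (Q y)) - Real.log (f (Q θ)) ≤ γ * Real.log r := by
        rw [hlogr]; nlinarith [this]
      have : Real.log r ≤ Real.log (r + r') :=
        Real.log_le_log hr (le_add_of_nonneg_right hr'.le)
      nlinarith
    · have hF01 : ∀ x ∈ Set.Icc (Q θ) (Q y), F x ∈ Set.Ioo (0:ℝ) 1 := by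
        intro x hx
        have hxab : x ∈ Set.Ioo a b := Set.Icc_subset_Ioo hQθ.1 hQy.2 hx
        have h1 := hmonoF hQθ hxab hx.1
        have h2 := hmonoF hxab hQy hx.2
        rw [hFQθ] at h1; rw [hFQy] at h2
        exact ⟨lt_of_lt_of_le hθ0 h1, lt_of_le_of_lt h2 hy1⟩
      have := density_ratio_mono_aux F f f' a b γ hγ hFderiv hfderiv hfpos hcond
        (-1) (Or.inr rfl) (Q θ) (Q y) hQθ hQy h hF01
      rw [hFQy, hFQθ] at this
      have hle : Real.log (f (Q y)) - Real.log (f (Q θ)) ≤ γ * Real.log r' := by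
        rw [hlogr']; nlinarith [this]
      have : Real.log r' ≤ Real.log (r + r') :=
        Real.log_le_log hr' (le_add_of_nonneg_left hr.le)
      nlinarith
  -- conclude
  have hratio : f (Q y) / f (Q θ)
      = Real.exp (Real.log (f (Q y)) - Real.log (f (Q θ))) := by
    rw [Real.exp_sub, Real.exp_log hfQy, Real.exp_log hfQθ]
  have hrpow : (r + r') ^ γ = Real.exp (γ * Real.log (r + r')) := by
    rw [Real.rpow_def_of_pos (by positivity), mul_comm]
  rw [hratio, hrpow]
  exact Real.exp_le_exp.2 key
end
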